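/- For every positive integer n and every Boolean function g : {0,1}^n → {0,1}, the energy complexity of the extended address function satisfies EC(EADDR_{n,g}) ≤ 6n + 2. -/

import Mathlib

/-- A gate in a Boolean circuit over the standard basis `{∨₂, ∧₂, ¬}`:
input gates labelled by variables, constant gates, and `∧`/`∨`/`¬` gates
whose arguments are (indices of) earlier gates. -/
inductive Gate (n : ℕ) : Type where
  | input : Fin n → Gate n
  | const : Bool → Gate n
  | and : ℕ → ℕ → Gate n
  | or : ℕ → ℕ → Gate n
  | not : ℕ → Gate n
deriving DecidableEq

/-- The indices of the incoming gates of a gate. -/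
def Gate.deps {n : ℕ} : Gate n → List ℕ
  | .and a b => [a, b]
  | .or a b => [a, b]
  | .not a => [a]
  | _ => []

/-- Inner gates are the non-input (and non-constant) gates, i.e. `∧`, `∨`, `¬` gates. -/
def Gate.isInner {n : ℕ} : Gate n → Bool
  | .and _ _ => true
  | .or _ _ => true
  | .not _ => true
  | _ => false

/-- A Boolean circuit over the standard basis on `n` input variables: a sequence of
gates (topologically sorted, so each gate only takes earlier gates as inputs,
which makes the underlying graph acyclic) together with a designated output gate. -/
structure Circuit (n : ℕ) : Type where
  size : ℕ
  gates : Fin size → Gate n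
  out : Fin size
  wf : ∀ i : Fin size, ∀ j ∈ (gates i).deps, j < (i : ℕ)

/-- The Boolean value of gate `i` of circuit `C` under input `x`. -/
def Circuit.evalGate {n : ℕ} (C : Circuit n) (x : Fin n → Bool) (i : ℕ) (h : i < C.size) :
    Bool :=
  match hg : C.gates ⟨i, h⟩ with
  | .input j => x j
  | .const b => b
  | .not a =>
      have ha : a < i := C.wf ⟨i, h⟩ a (by rw [hg]; simp [Gate.deps])
      ! C.evalGate x a (ha.trans h)
  | .and a b =>
      have ha : a < i := C.wf ⟨i, h⟩ a (by rw [hg]; simp [Gate.deps])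
      have hb : b < i := C.wf ⟨i, h⟩ b (by rw [hg]; simp [Gate.deps])
      C.evalGate x a (ha.trans h) && C.evalGate x b (hb.trans h)
  | .or a b =>
      have ha : a < i := C.wf ⟨i, h⟩ a (by rw [hg]; simp [Gate.deps])
      have hb : b < i := C.wf ⟨i, h⟩ b (by rw [hg]; simp [Gate.deps])
      C.evalGate x a (ha.trans h) || C.evalGate x b (hb.trans h)
termination_by i

/-- The output of circuit `C` on input `x`. -/
def Circuit.output {n : ℕ} (C : Circuit n) (x : Fin n → Bool) : Bool :=
  C.evalGate x C.out C.out.isLt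

/-- `C` computes the Boolean function `f`. -/
def Circuit.Computes {n : ℕ} (C : Circuit n) (f : (Fin n → Bool) → Bool) : Prop :=
  ∀ x, C.output x = f x

/-- The number of activated inner gates of `C` under input `x`. -/
def Circuit.energyAt {n : ℕ} (C : Circuit n) (x : Fin n → Bool) : ℕ :=
  (Finset.univ.filter fun i : Fin C.size =>
    (C.gates i).isInner = true ∧ C.evalGate x i i.isLt = true).card

/-- The energy complexity `EC(C)` of a circuit `C`: the maximum number of
activated inner gates over all inputs. -/
def Circuit.energy {n : ℕ} (C : Circuit n) : ℕ :=
  Finset.univ.sup fun x : Fin n → Bool => C.energyAt x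

/-- The energy complexity `EC(f)` of a Boolean function `f`: the minimum of `EC(C)`
over all circuits `C` computing `f`. -/
noncomputable def EC {n : ℕ} (f : (Fin n → Bool) → Bool) : ℕ :=
  sInf {k | ∃ C : Circuit n, C.Computes f ∧ C.energy = k}

/-- The number with binary representation `x 0, x 1, …, x (n-1)` (most significant
bit first); it is less than `2^n` (so taking `% 2^n` below does not change it). -/
def binVal {n : ℕ} (x : Fin n → Bool) : ℕ :=
  ∑ i : Fin n, if x i = true then 2 ^ (n - 1 - (i : ℕ)) else 0

/-- The extended address function `EADDR_{n,g} : {0,1}^{n+2^n} → {0,1}`: it returns the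
`y`-bit indexed by the number with binary representation `x_1 x_2 ⋯ x_n` if
`g(x) = 1`, and the negation of that bit if `g(x) = 0`. -/
def EADDR (n : ℕ) (g : (Fin n → Bool) → Bool) : (Fin (n + 2 ^ n) → Bool) → Bool := fun z =>
  let x : Fin n → Bool := fun i : Fin n => z (Fin.castAdd (2 ^ n) i)
  let y : Bool := z (Fin.natAdd n ⟨binVal x % 2 ^ n, Nat.mod_lt _ (by positivity)⟩)
  if g x then y else !y

/-! Two `∨`-trees over the address bits compute `g x ∧ y_x` and `g x ∨ y_x`, and the output is
`(g ∧ y) ∨ ¬(g ∨ y)`. The node of a tree below a prefix `w` computes `[x starts with w] ∧ v`,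
where `v` is the value of the tree: its leaf at address `a` is `[x = a] ∧ (g a ∧ y_a)` (resp. `∨`),
with `g a` entering as a constant gate, and the prefix tests `[x starts with w]` are chains of
`∧`-gates over the address literals. Hence only gates along the path of `x` can be activated: at
most `n` negated address bits, `n` prefix tests, `2(n + 1)` tree nodes and the `2` output gates,
i.e. `4n + 4 ≤ 6n + 2` gates. -/

open Finset

inductive NamedGate (n : ℕ) (ι : Type*) where
  | input : Fin n → NamedGate n ι
  | const : Bool → NamedGate n ι
  | and : ι → ι → NamedGate n ι
  | or : ι → ι → NamedGate n ι
  | not : ι → NamedGate n ι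

namespace NamedGate

variable {n : ℕ} {ι : Type*}

def args : NamedGate n ι → List ι
  | .and a b => [a, b]
  | .or a b => [a, b]
  | .not a => [a]
  | _ => []

def isInner : NamedGate n ι → Bool
  | .and _ _ | .or _ _ | .not _ => true
  | _ => false

def eval (x : Fin n → Bool) (v : ι → Bool) : NamedGate n ι → Bool
  | .input j => x j
  | .const b => b
  | .and a b => v a && v b
  | .or a b => v a || v b
  | .not a => !v a

def toGate (f : ι → ℕ) : NamedGate n ι → Gate n
  | .input j => .input j
  | .const b => .const b
  | .and a b => .and (f a) (f b)
  | .or a b => .or (f a) (f b)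
  | .not a => .not (f a)

@[simp]
lemma deps_toGate (f : ι → ℕ) (G : NamedGate n ι) : (G.toGate f).deps = G.args.map f := by
  cases G <;> rfl

@[simp]
lemma isInner_toGate (f : ι → ℕ) (G : NamedGate n ι) : (G.toGate f).isInner = G.isInner := by
  cases G <;> rfl

end NamedGate

lemma Circuit.evalGate_eq_eval {n : ℕ} {ι : Type*} (C : Circuit n) (x : Fin n → Bool) {p : ℕ}
    (h : p < C.size) {G : NamedGate n ι} {f : ι → ℕ} (hG : C.gates ⟨p, h⟩ = G.toGate f)
    (v : ι → Bool) (hv : ∀ j ∈ G.args, ∀ hj : f j < C.size, C.evalGate x (f j) hj = v j) :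
    C.evalGate x p h = G.eval x v := by
  rw [Circuit.evalGate.eq_def]
  cases G <;> simp only [NamedGate.args, List.forall_mem_cons] at hv <;>
    split <;> simp_all [NamedGate.toGate, NamedGate.eval]

/-- Gates named by an arbitrary type instead of by positions, so that a construction needs no
index arithmetic; `toCircuit` lays them out along `rank`. -/
structure RankedCircuit (n : ℕ) (ι : Type*) where
  gate : ι → NamedGate n ι
  rank : ι → ℕ
  rank_lt : ∀ i, ∀ j ∈ (gate i).args, rank j < rank i
  out : ι

namespace RankedCircuit

variable {n : ℕ} {ι : Type*} (R : RankedCircuit n ι)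

def IsValuation (x : Fin n → Bool) (v : ι → Bool) : Prop :=
  ∀ i, v i = (R.gate i).eval x v

variable [Fintype ι]

noncomputable abbrev rankOrder : LinearOrder ι :=
  LinearOrder.lift' (fun i => toLex (R.rank i, Fintype.equivFin ι i)) fun _ _ h =>
    (Fintype.equivFin ι).injective (congrArg (fun p => (ofLex p).2) h)

noncomputable def enum : ι ≃ Fin (Fintype.card ι) :=
  letI := R.rankOrder
  (Fintype.orderIsoFinOfCardEq ι rfl).symm.toEquiv

lemma enum_lt_enum {i j : ι} (h : R.rank i < R.rank j) : R.enum i < R.enum j :=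
  letI := R.rankOrder
  (Fintype.orderIsoFinOfCardEq ι rfl).symm.strictMono
    (Prod.Lex.toLex_lt_toLex.2 (Or.inl h))

noncomputable def toCircuit : Circuit n where
  size := Fintype.card ι
  gates p := (R.gate (R.enum.symm p)).toGate fun j => R.enum j
  out := R.enum R.out
  wf p j hj := by
    rw [NamedGate.deps_toGate, List.mem_map] at hj
    obtain ⟨j, hj, rfl⟩ := hj
    simpa using R.enum_lt_enum (R.rank_lt _ j hj)

variable {R}

theorem evalGate_toCircuit {x : Fin n → Bool} {v : ι → Bool} (hv : R.IsValuation x v) (i : ι) :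
    R.toCircuit.evalGate x (R.enum i) (R.enum i).isLt = v i := by
  induction i using (measure R.rank).wf.induction with
  | _ i ih =>
    rw [hv i]
    refine R.toCircuit.evalGate_eq_eval x _ (G := R.gate i) (f := fun j => R.enum j)
      (by simp [toCircuit]) v fun j hj _ => ih j (R.rank_lt i j hj)

theorem energyAt_toCircuit {x : Fin n → Bool} {v : ι → Bool} (hv : R.IsValuation x v) :
    R.toCircuit.energyAt x = #{i | (R.gate i).isInner = true ∧ v i = true} := by
  change #{p : Fin (Fintype.card ι) | (R.toCircuit.gates p).isInner = true ∧
    R.toCircuit.evalGate x p p.isLt = true} = _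
  refine (Finset.card_equiv R.enum fun i => ?_).symm
  simp only [mem_filter, mem_univ, true_and, evalGate_toCircuit hv]
  simp [toCircuit]

theorem computes_toCircuit {f : (Fin n → Bool) → Bool} {val : (Fin n → Bool) → ι → Bool}
    (hval : ∀ x, R.IsValuation x (val x)) (hf : ∀ x, val x R.out = f x) :
    R.toCircuit.Computes f := fun x => by
  rw [← hf, ← evalGate_toCircuit (hval x)]
  rfl

theorem EC_le {f : (Fin n → Bool) → Bool} (val : (Fin n → Bool) → ι → Bool)
    (hval : ∀ x, R.IsValuation x (val x)) (hf : ∀ x, val x R.out = f x) {k : ℕ}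
    (hk : ∀ x, #{i | (R.gate i).isInner = true ∧ val x i = true} ≤ k) : EC f ≤ k :=
  calc EC f ≤ R.toCircuit.energy := Nat.sInf_le ⟨R.toCircuit, computes_toCircuit hval hf, rfl⟩
    _ ≤ k := Finset.sup_le fun x _ => (energyAt_toCircuit (hval x)).trans_le (hk x)

end RankedCircuit

namespace EADDR

/-- `prefixTest d w` tests whether the address starts with `w`; `tree k d w` is the node below the
prefix `w` of the `∨`-tree computing `g ∧ y` (`k = true`) or `g ∨ y` (`k = false`). -/
inductive Node (n : ℕ) : Type
  | bit (i : Fin n)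
  | negBit (i : Fin n)
  | const (b : Bool)
  | cell (a : Fin (2 ^ n))
  | prefixTest (d : Fin (n + 1)) (w : Fin d → Bool)
  | tree (k : Bool) (d : Fin (n + 1)) (w : Fin d → Bool)
  | negOr
  | out
  deriving Fintype, DecidableEq

variable {n : ℕ} (g : (Fin n → Bool) → Bool)

def cellIndex (x : Fin n → Bool) : Fin (2 ^ n) :=
  ⟨binVal x % 2 ^ n, Nat.mod_lt _ (by positivity)⟩

def address (z : Fin (n + 2 ^ n) → Bool) : Fin n → Bool :=
  fun i => z (Fin.castAdd (2 ^ n) i)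

def addressed (z : Fin (n + 2 ^ n) → Bool) : Bool :=
  z (Fin.natAdd n (cellIndex (address z)))

def addressPrefix (x : Fin n → Bool) (d : Fin (n + 1)) : Fin d → Bool :=
  Fin.take d (Nat.lt_succ_iff.mp d.isLt) x

/-- `g ∧ y` for `k = true` and `g ∨ y` for `k = false`. -/
def branch (k : Bool) (z : Fin (n + 2 ^ n) → Bool) : Bool :=
  if g (address z) = k then addressed z else !k

def leafInput (k : Bool) (x : Fin n → Bool) : Node n :=
  if g x = k then .cell (cellIndex x) else .const !k

def root (k : Bool) : Node n := .tree k ⟨0, Nat.succ_pos n⟩ Fin.elim0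

def gate : Node n → NamedGate (n + 2 ^ n) (Node n)
  | .bit i => .input (Fin.castAdd _ i)
  | .negBit i => .not (.bit i)
  | .const b => .const b
  | .cell a => .input (Fin.natAdd n a)
  | .prefixTest ⟨0, _⟩ _ => .const true
  | .prefixTest ⟨m + 1, h⟩ w =>
      .and (.prefixTest ⟨m, by omega⟩ (Fin.init w))
        (if w (Fin.last m) then .bit ⟨m, by omega⟩ else .negBit ⟨m, by omega⟩)
  | .tree k ⟨d, h⟩ w =>
      if hd : d < n then
        .or (.tree k ⟨d + 1, by omega⟩ (Fin.snoc w false))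
          (.tree k ⟨d + 1, by omega⟩ (Fin.snoc w true))
      else
        .and (.prefixTest ⟨d, h⟩ w) (leafInput g k (w ∘ Fin.cast (show n = d by omega)))
  | .negOr => .not (root false)
  | .out => .or (root true) .negOr

def rank : Node n → ℕ
  | .bit _ | .const _ | .cell _ => 0
  | .negBit _ => 1
  | .prefixTest d _ => d + 2
  | .tree _ d _ => 2 * n + 3 - d
  | .negOr => 2 * n + 4
  | .out => 2 * n + 5

lemma rank_lt_of_mem_args (i j : Node n) (hj : j ∈ (gate g i).args) : rank j < rank i := by
  rcases i with _ | _ | _ | _ | ⟨⟨_ | m, hm⟩, w⟩ | ⟨k, ⟨d, hd⟩, w⟩ | _ | _ <;>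
    simp only [gate, NamedGate.args] at hj
  all_goals
    (try split_ifs at hj) <;>
    simp only [List.mem_cons, List.not_mem_nil, or_false, root] at hj <;>
    rcases hj with rfl | rfl <;> (try unfold leafInput; split_ifs) <;> simp [rank] <;> omega

def circuit : RankedCircuit (n + 2 ^ n) (Node n) where
  gate := gate g
  rank := rank
  rank_lt := rank_lt_of_mem_args g
  out := .out

def value (z : Fin (n + 2 ^ n) → Bool) : Node n → Bool
  | .bit i => z (Fin.castAdd _ i)
  | .negBit i => !z (Fin.castAdd _ i)
  | .const b => b
  | .cell a => z (Fin.natAdd n a)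
  | .prefixTest d w => decide (w = addressPrefix (address z) d)
  | .tree k d w => decide (w = addressPrefix (address z) d) && branch g k z
  | .negOr => !branch g false z
  | .out => EADDR n g z

lemma addressPrefix_succ (x : Fin n → Bool) {m : ℕ} (h : m + 1 < n + 1) :
    addressPrefix x ⟨m + 1, h⟩ = Fin.snoc (addressPrefix x ⟨m, by omega⟩) (x ⟨m, by omega⟩) :=
  Fin.take_succ_eq_snoc m _ x

lemma eq_addressPrefix_succ_iff (x : Fin n → Bool) {m : ℕ} (h : m + 1 < n + 1)
    (w : Fin (m + 1) → Bool) :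
    w = addressPrefix x ⟨m + 1, h⟩ ↔
      Fin.init w = addressPrefix x ⟨m, by omega⟩ ∧ w (Fin.last m) = x ⟨m, by omega⟩ := by
  rw [addressPrefix_succ, ← Fin.snoc_init_self w, Fin.snoc_inj, Fin.init_snoc, Fin.snoc_last]

lemma EADDR_eq_branch (z : Fin (n + 2 ^ n) → Bool) :
    EADDR n g z = (branch g true z || !branch g false z) := by
  change (if g (address z) then addressed z else !addressed z) = _
  unfold branch
  cases g (address z) <;> cases addressed z <;> rfl

lemma value_leafInput (k : Bool) (z : Fin (n + 2 ^ n) → Bool) :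
    value g z (leafInput g k (address z)) = branch g k z := by
  unfold leafInput branch
  split <;> rfl

lemma value_root (k : Bool) (z : Fin (n + 2 ^ n) → Bool) :
    value g z (root k) = branch g k z := by
  have hw : (Fin.elim0 : Fin 0 → Bool) = addressPrefix (address z) ⟨0, Nat.succ_pos n⟩ :=
    Subsingleton.elim _ _
  rw [root, value, decide_eq_true hw, Bool.true_and]

theorem isValuation_value (z : Fin (n + 2 ^ n) → Bool) :
    (circuit g).IsValuation z (value g z) := by
  rintro (_ | _ | _ | _ | ⟨⟨_ | m, hm⟩, w⟩ | ⟨k, ⟨d, hd⟩, w⟩ | _ | _)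
  iterate 4 rfl
  · exact decide_eq_true
      (funext fun i : Fin 0 => i.elim0 : w = addressPrefix (address z) ⟨0, hm⟩)
  · simp only [circuit, gate, NamedGate.eval, value, eq_addressPrefix_succ_iff]
    cases w (Fin.last m) <;> simp [address]
  · simp only [circuit, gate]
    split_ifs with hdn
    · simp only [NamedGate.eval, value, eq_addressPrefix_succ_iff, Fin.init_snoc, Fin.snoc_last]
      cases address z ⟨d, hdn⟩ <;> simp
    · obtain rfl : n = d := by omega
      by_cases hw : w = addressPrefix (address z) ⟨n, hd⟩
      · have hx : w ∘ Fin.cast rfl = address z := by rw [hw]; exact Fin.take_eq_self _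
        simp only [NamedGate.eval]
        rw [hx, value_leafInput]
        rfl
      · simp [NamedGate.eval, value, hw]
  · exact (congrArg (!·) (value_root g false z)).symm
  · exact (EADDR_eq_branch g z).trans (by rw [← value_root g true z]; rfl)

def activeNode (z : Fin (n + 2 ^ n) → Bool) :
    Fin n ⊕ Fin n ⊕ (Bool × Fin (n + 1)) ⊕ Bool → Node n
  | .inl i => .negBit i
  | .inr (.inl i) => .prefixTest i.succ (addressPrefix (address z) i.succ)
  | .inr (.inr (.inl (k, d))) => .tree k d (addressPrefix (address z) d)
  | .inr (.inr (.inr b)) => if b then .out else .negOr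

lemma mem_range_activeNode {z : Fin (n + 2 ^ n) → Bool} {i : Node n}
    (hinner : (gate g i).isInner = true) (hi : value g z i = true) :
    i ∈ Set.range (activeNode z) := by
  rcases i with i | i | b | a | ⟨⟨_ | m, hm⟩, w⟩ | ⟨k, d, w⟩ | _ | _
  · simp [gate, NamedGate.isInner] at hinner
  · exact ⟨.inl i, rfl⟩
  · simp [gate, NamedGate.isInner] at hinner
  · simp [gate, NamedGate.isInner] at hinner
  · simp [gate, NamedGate.isInner] at hinner
  · obtain rfl : w = addressPrefix (address z) ⟨m + 1, hm⟩ := of_decide_eq_true hi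
    exact ⟨.inr (.inl ⟨m, by omega⟩), rfl⟩
  · obtain rfl : w = addressPrefix (address z) d :=
      of_decide_eq_true (Bool.and_eq_true_iff.mp hi).1
    exact ⟨.inr (.inr (.inl (k, d))), rfl⟩
  · exact ⟨.inr (.inr (.inr false)), rfl⟩
  · exact ⟨.inr (.inr (.inr true)), rfl⟩

lemma card_active_le (z : Fin (n + 2 ^ n) → Bool) :
    #{i | (gate g i).isInner = true ∧ value g z i = true} ≤ 4 * n + 4 :=
  calc _ ≤ #(univ.image (activeNode z)) := card_le_card fun i hi => by
          simp only [mem_filter, mem_univ, true_and] at hi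
          obtain ⟨a, rfl⟩ := mem_range_activeNode g hi.1 hi.2
          exact mem_image_of_mem _ (mem_univ a)
    _ ≤ #(univ : Finset (Fin n ⊕ Fin n ⊕ (Bool × Fin (n + 1)) ⊕ Bool)) := card_image_le
    _ = 4 * n + 4 := by simp; ring

end EADDR

/-- For every positive integer `n` and every Boolean function
`g : {0,1}^n → {0,1}`, `EC(EADDR_{n,g}) ≤ 6n + 2`. -/
theorem stmt10 (n : ℕ) (hn : 0 < n) (g : (Fin n → Bool) → Bool) :
    EC (EADDR n g) ≤ 6 * n + 2 :=
  (EADDR.circuit g).EC_le (EADDR.value g) (EADDR.isValuation_value g) (fun _ => rfl)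
    fun z => (EADDR.card_active_le g z).trans (by omega)
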